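/- arXiv:1507.01244 — 3 statements merged into one kernel-verified Lean document; each statement's English description precedes it below -/
import Mathlib

section
/- For a finite Markov chain with stationary distribution μ (with μ strictly positive), the relative entropy of the time-evolved measure with respect to μ is nonincreasing in time: for any probability measure ν and any stochastic matrix P with μP = μ, H(νP | μ) ≤ H(ν | μ), where H(ν|μ) = ∑_x ν(x) log(ν(x)/μ(x)). -/
open Finset Real

/-- The log-sum inequality: Jensen's inequality for the concave `negMulLog`, with weights
`μᵢ cᵢ / ∑ μⱼ cⱼ` at the points `νᵢ / μᵢ`. -/
theorem sum_mul_log_div_sum_le {ι : Type*} (s : Finset ι) {c μ ν : ι → ℝ}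
    (hc : ∀ i ∈ s, 0 ≤ c i) (hμ : ∀ i ∈ s, 0 < μ i) (hν : ∀ i ∈ s, 0 ≤ ν i) :
    (∑ i ∈ s, ν i * c i) * log ((∑ i ∈ s, ν i * c i) / ∑ i ∈ s, μ i * c i) ≤
      ∑ i ∈ s, ν i * c i * log (ν i / μ i) := by
  set m := ∑ i ∈ s, μ i * c i
  have hμc : ∀ i ∈ s, 0 ≤ μ i * c i := fun i hi => mul_nonneg (hμ i hi).le (hc i hi)
  rcases (sum_nonneg hμc).eq_or_lt with hm_zero | hm_pos
  · have hc_zero : ∀ i ∈ s, c i = 0 := fun i hi =>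
      ((mul_eq_zero.1 ((sum_eq_zero_iff_of_nonneg hμc).1 hm_zero.symm i hi)).resolve_left
        (hμ i hi).ne')
    rw [sum_eq_zero fun i hi => by rw [hc_zero i hi, mul_zero],
      sum_eq_zero fun i hi => by rw [hc_zero i hi, mul_zero, zero_mul], zero_mul]
  have jensen := concaveOn_negMulLog.le_map_sum (t := s) (w := fun i => μ i * c i / m)
    (p := fun i => ν i / μ i) (fun i hi => div_nonneg (hμc i hi) hm_pos.le)
    (by rw [← sum_div, div_self hm_pos.ne']) (fun i hi => div_nonneg (hν i hi) (hμ i hi).le)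
  have hpoint : ∀ i ∈ s, (μ i * c i / m) • (ν i / μ i) = ν i * c i / m := fun i hi => by
    have := (hμ i hi).ne'
    simp only [smul_eq_mul]
    field_simp
  have hvalue : ∀ i ∈ s, (μ i * c i / m) • negMulLog (ν i / μ i) =
      -(ν i * c i * log (ν i / μ i)) / m := fun i hi => by
    have := (hμ i hi).ne'
    simp only [smul_eq_mul, negMulLog]
    field_simp
  rw [sum_congr rfl hpoint, sum_congr rfl hvalue, ← sum_div, ← sum_div, sum_neg_distrib,
    negMulLog, neg_mul, neg_div, neg_le_neg_iff, div_mul_eq_mul_div] at jensen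
  exact (div_le_div_iff_of_pos_right hm_pos).1 jensen

theorem relEntropy_nonincreasing_general {S : Type*} [Fintype S]
    (P : S → S → ℝ) (hP_nonneg : ∀ x y, 0 ≤ P x y) (hP_row : ∀ x, ∑ y, P x y = 1)
    (μ : S → ℝ) (hμ_pos : ∀ x, 0 < μ x)
    (hμ_stat : ∀ y, ∑ x, μ x * P x y = μ y)
    (ν : S → ℝ) (hν_nonneg : ∀ x, 0 ≤ ν x) :
    ∑ y, (∑ x, ν x * P x y) * Real.log ((∑ x, ν x * P x y) / μ y) ≤
      ∑ x, ν x * Real.log (ν x / μ x) := by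
  calc ∑ y, (∑ x, ν x * P x y) * log ((∑ x, ν x * P x y) / μ y)
      ≤ ∑ y, ∑ x, ν x * P x y * log (ν x / μ x) := by
        refine sum_le_sum fun y _ => ?_
        rw [← hμ_stat y]
        exact sum_mul_log_div_sum_le univ (fun x _ => hP_nonneg x y) (fun x _ => hμ_pos x)
          fun x _ => hν_nonneg x
    _ = ∑ x, ν x * log (ν x / μ x) := by
        rw [sum_comm]
        simp only [← sum_mul, ← mul_sum, hP_row, mul_one]

/-- Relative entropy to a stationary measure is nonincreasing under a stochastic matrix. -/
theorem relEntropy_nonincreasing {S : Type*} [Fintype S]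
    (P : S → S → ℝ) (hP_nonneg : ∀ x y, 0 ≤ P x y) (hP_row : ∀ x, ∑ y, P x y = 1)
    (μ : S → ℝ) (hμ_pos : ∀ x, 0 < μ x) (hμ_sum : ∑ x, μ x = 1)
    (hμ_stat : ∀ y, ∑ x, μ x * P x y = μ y)
    (ν : S → ℝ) (hν_nonneg : ∀ x, 0 ≤ ν x) (hν_sum : ∑ x, ν x = 1) :
    ∑ y, (∑ x, ν x * P x y) * Real.log ((∑ x, ν x * P x y) / μ y) ≤
      ∑ x, ν x * Real.log (ν x / μ x) :=
  relEntropy_nonincreasing_general P hP_nonneg hP_row μ hμ_pos hμ_stat ν hν_nonneg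
end

section
/- Let (a_n)_{n∈ℕ} be a sequence of nonpositive real numbers satisfying a_n ≤ 2^d · a_{n-1} for all n ≥ 1 (d a fixed positive integer), and let G(n) = ∏_{l=n}^∞ ((2^{l+2}-2)^d / (2^{l+2}-1)^d). Then the sequence n ↦ G(n)·a_n/(2^{n+1}-1)^d is nonincreasing, and hence converges in [-∞, 0]. -/
/-!
Writing `x_n = G(n) a_n / (2^{n+1} - 1)^d`, the first factor of `G(n)` is
`(2^{n+2} - 2)^d / (2^{n+2} - 1)^d = 2^d (2^{n+1} - 1)^d / (2^{n+2} - 1)^d`, so peeling it off gives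
`x_n = G(n+1) · 2^d a_n / (2^{n+2} - 1)^d`; the peeling is legitimate because the factors are
`(1 - (2^m - 1)⁻¹)^d` with summable defects, so the product converges. Comparing with `x_{n+1}` reduces monotonicity to
`a_{n+1} ≤ 2^d a_n`, as `G(n+1) ≥ 0`. An antitone sequence converges in `EReal` to its infimum,
which is at most `x_0 ≤ 0`.
-/

open Filter Topology

/-- The factors of `G(n)` are `dyadicFactor d m` for the exponents `m = n + l + 2`, `l ∈ ℕ`. -/
noncomputable def dyadicFactor (d m : ℕ) : ℝ :=
  ((2 : ℝ) ^ m - 2) ^ d / ((2 : ℝ) ^ m - 1) ^ d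

lemma dyadicFactor_nonneg (d : ℕ) {m : ℕ} (hm : 1 ≤ m) : 0 ≤ dyadicFactor d m := by
  have : (2 : ℝ) ≤ 2 ^ m := le_self_pow₀ one_le_two (by omega)
  unfold dyadicFactor
  exact div_nonneg (pow_nonneg (by linarith) d) (pow_nonneg (by linarith) d)

lemma dyadicFactor_eq_one_add_neg_inv_pow (d : ℕ) {m : ℕ} (hm : 1 ≤ m) :
    dyadicFactor d m = (1 + -((2 : ℝ) ^ m - 1)⁻¹) ^ d := by
  have : (2 : ℝ) ^ m - 1 ≠ 0 := by
    have : (2 : ℝ) ≤ 2 ^ m := le_self_pow₀ one_le_two (by omega)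
    linarith
  rw [dyadicFactor, ← div_pow]
  congr 1
  field_simp
  ring

lemma dyadicFactor_div_pow_eq (d n : ℕ) :
    dyadicFactor d (n + 2) / ((2 : ℝ) ^ (n + 1) - 1) ^ d = 2 ^ d / ((2 : ℝ) ^ (n + 2) - 1) ^ d := by
  have htwo : (2 : ℝ) ≤ 2 ^ (n + 1) := le_self_pow₀ one_le_two (by omega)
  have hne₁ : (2 : ℝ) ^ (n + 1) - 1 ≠ 0 := by linarith
  have hne₂ : (2 : ℝ) ^ (n + 2) - 1 ≠ 0 := by rw [pow_succ]; linarith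
  have hsplit : (2 : ℝ) ^ (n + 2) - 2 = 2 * ((2 : ℝ) ^ (n + 1) - 1) := by ring
  rw [dyadicFactor, hsplit, mul_pow]
  field_simp

lemma inv_two_pow_sub_one_le (n l : ℕ) : ((2 : ℝ) ^ (n + l + 2) - 1)⁻¹ ≤ (1 / 2) ^ l := by
  have hl : (1 : ℝ) ≤ 2 ^ l := one_le_pow₀ one_le_two
  have hle : (2 : ℝ) ^ (l + 2) ≤ 2 ^ (n + l + 2) := pow_le_pow_right₀ one_le_two (by omega)
  rw [one_div_pow, one_div]
  apply inv_anti₀ (by positivity)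
  rw [pow_add] at hle
  linarith

lemma summable_inv_two_pow_sub_one (n : ℕ) :
    Summable fun l : ℕ => ((2 : ℝ) ^ (n + l + 2) - 1)⁻¹ := by
  refine summable_geometric_two.of_nonneg_of_le (fun l => ?_) (inv_two_pow_sub_one_le n)
  have : (1 : ℝ) ≤ 2 ^ (n + l + 2) := one_le_pow₀ one_le_two
  exact inv_nonneg.mpr (by linarith)

lemma multipliable_dyadicFactor (d n : ℕ) :
    Multipliable fun l : ℕ => dyadicFactor d (n + l + 2) := by
  have hfactor : (fun l : ℕ => dyadicFactor d (n + l + 2)) =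
      fun l => (1 + -((2 : ℝ) ^ (n + l + 2) - 1)⁻¹) ^ d :=
    funext fun l => dyadicFactor_eq_one_add_neg_inv_pow d (by omega)
  rw [hfactor]
  exact (Real.multipliable_one_add_of_summable (summable_inv_two_pow_sub_one n).neg).pow d

lemma tprod_dyadicFactor_eq_mul_succ (d n : ℕ) :
    ∏' l : ℕ, dyadicFactor d (n + l + 2) =
      dyadicFactor d (n + 2) * ∏' l : ℕ, dyadicFactor d (n + 1 + l + 2) := by
  have hshift : (fun l => dyadicFactor d (n + (l + 1) + 2)) =
      fun l => dyadicFactor d (n + 1 + l + 2) := by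
    funext l
    rw [show n + (l + 1) = n + 1 + l by omega]
  rw [tprod_eq_zero_mul' (hshift ▸ multipliable_dyadicFactor d (n + 1)), hshift]

lemma Antitone.exists_tendsto_coe_ereal {u : ℕ → ℝ} (hu : Antitone u) :
    ∃ L : EReal, L ≤ u 0 ∧ Tendsto (fun n => (u n : EReal)) atTop (𝓝 L) :=
  ⟨⨅ n, (u n : EReal), iInf_le _ 0,
    tendsto_atTop_iInf fun _ _ hmn => EReal.coe_le_coe_iff.mpr (hu hmn)⟩

theorem normalized_entropy_sequence_antitone_general (d : ℕ)
    (a : ℕ → ℝ) (ha_nonpos : ∀ n, a n ≤ 0)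
    (ha_step : ∀ n, a (n + 1) ≤ 2 ^ d * a n)
    (G : ℕ → ℝ)
    (hG : ∀ n, G n = ∏' l : ℕ,
      (((2 : ℝ) ^ (n + l + 2) - 2) ^ d / ((2 : ℝ) ^ (n + l + 2) - 1) ^ d)) :
    Antitone (fun n => G n * a n / ((2 : ℝ) ^ (n + 1) - 1) ^ d) ∧
      ∃ L : EReal, L ≤ 0 ∧
        Tendsto (fun n => ((G n * a n / ((2 : ℝ) ^ (n + 1) - 1) ^ d : ℝ) : EReal))
          atTop (nhds L) := by
  have hG_nonneg (n : ℕ) : 0 ≤ G n :=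
    hG n ▸ tprod_nonneg fun l => dyadicFactor_nonneg d (by omega)
  have hG_succ (n : ℕ) : G n = dyadicFactor d (n + 2) * G (n + 1) := by
    rw [hG, hG]
    exact tprod_dyadicFactor_eq_mul_succ d n
  have hanti : Antitone fun n => G n * a n / ((2 : ℝ) ^ (n + 1) - 1) ^ d := by
    refine antitone_nat_of_succ_le fun n => ?_
    calc G (n + 1) * a (n + 1) / ((2 : ℝ) ^ (n + 2) - 1) ^ d
        ≤ G (n + 1) * (2 ^ d * a n) / ((2 : ℝ) ^ (n + 2) - 1) ^ d := by
          have : (1 : ℝ) ≤ 2 ^ (n + 2) := one_le_pow₀ one_le_two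
          gcongr
          exacts [hG_nonneg _, ha_step n]
      _ = G (n + 1) * a n * (2 ^ d / ((2 : ℝ) ^ (n + 2) - 1) ^ d) := by ring
      _ = G (n + 1) * a n * (dyadicFactor d (n + 2) / ((2 : ℝ) ^ (n + 1) - 1) ^ d) := by
          rw [dyadicFactor_div_pow_eq]
      _ = G n * a n / ((2 : ℝ) ^ (n + 1) - 1) ^ d := by
          rw [hG_succ n]
          ring
  obtain ⟨L, hL, hlim⟩ := hanti.exists_tendsto_coe_ereal
  refine ⟨hanti, L, hL.trans ?_, hlim⟩
  exact EReal.coe_nonpos.mpr <| div_nonpos_of_nonpos_of_nonneg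
    (mul_nonpos_of_nonneg_of_nonpos (hG_nonneg 0) (ha_nonpos 0)) (by norm_num)

/-- Monotonicity and convergence (in the extended reals) of the normalized sequence
`G(n)·a_n/(2^{n+1}-1)^d` where `a_n ≤ 0`, `a_n ≤ 2^d a_{n-1}` and
`G(n) = ∏_{l=n}^∞ ((2^{l+2}-2)^d/(2^{l+2}-1)^d)`. -/
theorem normalized_entropy_sequence_antitone (d : ℕ) (hd : 1 ≤ d)
    (a : ℕ → ℝ) (ha_nonpos : ∀ n, a n ≤ 0)
    (ha_step : ∀ n, a (n + 1) ≤ 2 ^ d * a n)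
    (G : ℕ → ℝ)
    (hG : ∀ n, G n = ∏' l : ℕ,
      (((2 : ℝ) ^ (n + l + 2) - 2) ^ d / ((2 : ℝ) ^ (n + l + 2) - 1) ^ d)) :
    Antitone (fun n => G n * a n / ((2 : ℝ) ^ (n + 1) - 1) ^ d) ∧
      ∃ L : EReal, L ≤ 0 ∧
        Tendsto (fun n => ((G n * a n / ((2 : ℝ) ^ (n + 1) - 1) ^ d : ℝ) : EReal))
          atTop (nhds L) :=
  normalized_entropy_sequence_antitone_general d a ha_nonpos ha_step G hG
end

section
/- Entropy loss is nonpositive for a finite-state continuous-time Markov chain at its stationary measure: let Q be a generator matrix on a finite state space S (Q(x,y) ≥ 0 for x ≠ y, ∑_y Q(x,y) = 0) with strictly positive stationary distribution μ (∑_x μ(x) Q(x,y) = 0 for all y). Then for every probability vector ν, d/dt|_{t=0} H(ν e^{tQ} | μ) = ∑_{x,y, x≠y} ν(x) Q(x,y) log( ν(y) μ(x) / (ν(x) μ(y)) ) ≤ 0 whenever ν is strictly positive. -/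
/-!
Write `h = ν / μ` and `g = log h`. Because the rows of `Q` sum to zero, both the derivative of
`t ↦ H(ν e^{tQ} | μ)` at `0` and the displayed sum equal `ν ⬝ᵥ Q g = ∑ₓ μ(x) h(x) (Q log h)(x)`.
Off the diagonal `Q` is nonnegative, so `a (log b - log a) ≤ b - a` gives `h · Q(log h) ≤ Q h`
pointwise, and `∑ₓ μ(x) (Q h)(x) = (μ Q) ⬝ᵥ h = 0` by stationarity.
-/

open Finset Matrix

theorem Matrix.hasDerivAt_vecMul_exp_smul {S : Type*} [Fintype S] [DecidableEq S]
    (ν : S → ℝ) (Q : Matrix S S ℝ) (t : ℝ) :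
    HasDerivAt (fun u : ℝ => ν ᵥ* NormedSpace.exp (u • Q))
      (ν ᵥ* (NormedSpace.exp (t • Q) * Q)) t := by
  let _ : NormedRing (Matrix S S ℝ) := Matrix.linftyOpNormedRing
  let _ : NormedAlgebra ℝ (Matrix S S ℝ) := Matrix.linftyOpNormedAlgebra
  exact (LinearMap.toContinuousLinearMap (vecMulBilin ℝ ℝ ν)).hasFDerivAt.comp_hasDerivAt t
    (hasDerivAt_exp_smul_const Q t)

theorem HasDerivAt.mul_log_div_const {f : ℝ → ℝ} {f' t c : ℝ} (hf : HasDerivAt f f' t)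
    (hft : f t ≠ 0) (hc : c ≠ 0) :
    HasDerivAt (fun s => f s * Real.log (f s / c)) (f' * (Real.log (f t / c) + 1)) t := by
  refine (hf.fun_mul ((hf.div_const c).log (div_ne_zero hft hc))).congr_deriv ?_
  field_simp

noncomputable def relEntropy {S : Type*} [Fintype S] (ν μ : S → ℝ) : ℝ :=
  ∑ y, ν y * Real.log (ν y / μ y)

theorem HasDerivAt.relEntropy {S : Type*} [Fintype S] {p : ℝ → S → ℝ} {p' : S → ℝ} {t : ℝ}
    (hp : HasDerivAt p p' t) (hpt : ∀ y, p t y ≠ 0) {μ : S → ℝ} (hμ : ∀ y, μ y ≠ 0) :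
    HasDerivAt (fun s => relEntropy (p s) μ) (p' ⬝ᵥ fun y => Real.log (p t y / μ y) + 1) t :=
  HasDerivAt.fun_sum fun y _ => (hasDerivAt_pi.1 hp y).mul_log_div_const (hpt y) (hμ y)

namespace Matrix

variable {S : Type*} [Fintype S] [DecidableEq S] {Q : Matrix S S ℝ}

theorem mulVec_apply_eq_sum_sdiff_mul_sub (hQ_row : ∀ x, ∑ y, Q x y = 0) (g : S → ℝ) (x : S) :
    (Q *ᵥ g) x = ∑ y ∈ univ \ {x}, Q x y * (g y - g x) := by
  have hdiag : ∑ y, Q x y * (g y - g x) = ∑ y ∈ univ \ {x}, Q x y * (g y - g x) := by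
    rw [sum_sdiff_eq_sub (subset_univ _), sum_singleton, sub_self, mul_zero, sub_zero]
  rw [← hdiag, mulVec, dotProduct]
  simp only [mul_sub, sum_sub_distrib, ← sum_mul, hQ_row, zero_mul, sub_zero]

theorem mulVec_add_const (hQ_row : ∀ x, ∑ y, Q x y = 0) (g : S → ℝ) (c : ℝ) :
    (Q *ᵥ fun y => g y + c) = Q *ᵥ g := by
  ext x
  simp only [mulVec_apply_eq_sum_sdiff_mul_sub hQ_row, add_sub_add_right_eq_sub]

theorem mul_mulVec_log_le_mulVec (hQ_offdiag : ∀ x y, x ≠ y → 0 ≤ Q x y)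
    (hQ_row : ∀ x, ∑ y, Q x y = 0) {h : S → ℝ} (hh : ∀ x, 0 < h x) (x : S) :
    h x * (Q *ᵥ fun y => Real.log (h y)) x ≤ (Q *ᵥ h) x := by
  rw [mulVec_apply_eq_sum_sdiff_mul_sub hQ_row, mulVec_apply_eq_sum_sdiff_mul_sub hQ_row, mul_sum]
  refine sum_le_sum fun y hy => ?_
  have hxy : x ≠ y := fun h => by simp [h] at hy
  have hlog : h x * (Real.log (h y) - Real.log (h x)) ≤ h y - h x := by
    calc h x * (Real.log (h y) - Real.log (h x))
        = h x * Real.log (h y / h x) := by rw [Real.log_div (hh y).ne' (hh x).ne']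
      _ ≤ h x * (h y / h x - 1) :=
          mul_le_mul_of_nonneg_left (Real.log_le_sub_one_of_pos (div_pos (hh y) (hh x))) (hh x).le
      _ = h y - h x := by rw [mul_sub, mul_div_cancel₀ _ (hh x).ne', mul_one]
  calc h x * (Q x y * (Real.log (h y) - Real.log (h x)))
      = Q x y * (h x * (Real.log (h y) - Real.log (h x))) := by ring
    _ ≤ Q x y * (h y - h x) := mul_le_mul_of_nonneg_left hlog (hQ_offdiag x y hxy)

theorem dotProduct_mulVec_log_div_nonpos (hQ_offdiag : ∀ x y, x ≠ y → 0 ≤ Q x y)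
    (hQ_row : ∀ x, ∑ y, Q x y = 0) {μ : S → ℝ} (hμ_pos : ∀ x, 0 < μ x) (hμ_stat : μ ᵥ* Q = 0)
    {ν : S → ℝ} (hν_pos : ∀ x, 0 < ν x) :
    ν ⬝ᵥ (Q *ᵥ fun y => Real.log (ν y / μ y)) ≤ 0 := by
  set h : S → ℝ := fun y => ν y / μ y
  have hν : ∀ x, ν x = μ x * h x := fun x => (mul_div_cancel₀ _ (hμ_pos x).ne').symm
  calc ν ⬝ᵥ (Q *ᵥ fun y => Real.log (h y))
      = ∑ x, μ x * (h x * (Q *ᵥ fun y => Real.log (h y)) x) := by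
        simp only [dotProduct, hν, mul_assoc]
    _ ≤ ∑ x, μ x * (Q *ᵥ h) x := sum_le_sum fun x _ =>
        mul_le_mul_of_nonneg_left
          (mul_mulVec_log_le_mulVec hQ_offdiag hQ_row (fun y => div_pos (hν_pos y) (hμ_pos y)) x)
          (hμ_pos x).le
    _ = 0 := by rw [← dotProduct, dotProduct_mulVec, hμ_stat, zero_dotProduct]

end Matrix

theorem entropy_loss_nonpos_general {S : Type*} [Fintype S] [DecidableEq S]
    (Q : Matrix S S ℝ) (hQ_offdiag : ∀ x y, x ≠ y → 0 ≤ Q x y)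
    (hQ_row : ∀ x, ∑ y, Q x y = 0)
    (μ : S → ℝ) (hμ_pos : ∀ x, 0 < μ x)
    (hμ_stat : ∀ y, ∑ x, μ x * Q x y = 0)
    (ν : S → ℝ) (hν_pos : ∀ x, 0 < ν x) :
    HasDerivAt
      (fun t : ℝ => ∑ y, (∑ x, ν x * NormedSpace.exp (t • Q) x y) *
        Real.log ((∑ x, ν x * NormedSpace.exp (t • Q) x y) / μ y))
      (∑ x, ∑ y ∈ univ \ {x}, ν x * Q x y * Real.log (ν y * μ x / (ν x * μ y))) 0 ∧
    (∑ x, ∑ y ∈ univ \ {x}, ν x * Q x y * Real.log (ν y * μ x / (ν x * μ y))) ≤ 0 := by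
  set g : S → ℝ := fun y => Real.log (ν y / μ y)
  have hlog_ratio : ∀ x y, Real.log (ν y * μ x / (ν x * μ y)) = g y - g x := fun x y => by
    rw [← Real.log_div (div_pos (hν_pos y) (hμ_pos y)).ne' (div_pos (hν_pos x) (hμ_pos x)).ne']
    congr 1
    field_simp [(hν_pos x).ne', (hμ_pos x).ne', (hν_pos y).ne', (hμ_pos y).ne']
  have hproduction : (∑ x, ∑ y ∈ univ \ {x}, ν x * Q x y * Real.log (ν y * μ x / (ν x * μ y)))
      = ν ⬝ᵥ (Q *ᵥ g) := by
    simp only [dotProduct, mulVec_apply_eq_sum_sdiff_mul_sub hQ_row, mul_sum, hlog_ratio, mul_assoc]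
  rw [hproduction]
  refine ⟨?_, dotProduct_mulVec_log_div_nonpos hQ_offdiag hQ_row hμ_pos (funext hμ_stat) hν_pos⟩
  have hν0 : ν ᵥ* NormedSpace.exp ((0 : ℝ) • Q) = ν := by simp
  have h := (hasDerivAt_vecMul_exp_smul ν Q 0).relEntropy
    (by simpa [hν0] using fun y => (hν_pos y).ne') fun y => (hμ_pos y).ne'
  rwa [← vecMul_vecMul, hν0, ← dotProduct_mulVec, mulVec_add_const hQ_row] at h

/-- Entropy production formula and nonpositivity for a finite continuous-time Markov chain
at a strictly positive stationary measure. -/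
theorem entropy_loss_nonpos {S : Type*} [Fintype S] [DecidableEq S]
    (Q : Matrix S S ℝ) (hQ_offdiag : ∀ x y, x ≠ y → 0 ≤ Q x y)
    (hQ_row : ∀ x, ∑ y, Q x y = 0)
    (μ : S → ℝ) (hμ_pos : ∀ x, 0 < μ x) (hμ_sum : ∑ x, μ x = 1)
    (hμ_stat : ∀ y, ∑ x, μ x * Q x y = 0)
    (ν : S → ℝ) (hν_pos : ∀ x, 0 < ν x) (hν_sum : ∑ x, ν x = 1) :
    HasDerivAt
      (fun t : ℝ => ∑ y, (∑ x, ν x * NormedSpace.exp (t • Q) x y) *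
        Real.log ((∑ x, ν x * NormedSpace.exp (t • Q) x y) / μ y))
      (∑ x, ∑ y ∈ univ \ {x}, ν x * Q x y * Real.log (ν y * μ x / (ν x * μ y))) 0 ∧
    (∑ x, ∑ y ∈ univ \ {x}, ν x * Q x y * Real.log (ν y * μ x / (ν x * μ y))) ≤ 0 :=
  entropy_loss_nonpos_general Q hQ_offdiag hQ_row μ hμ_pos hμ_stat ν hν_pos
end
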